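/- arXiv:2205.10847 — 3 statements merged into one kernel-verified Lean document; each statement's English description precedes it below -/
import Mathlib

section
/- If Φ is a bistochastic channel on a finite-dimensional Hilbert space with Φ*(H) = H for a self-adjoint operator H with spectral decomposition H = Σ_n λ_n P_n, then every state of the form ρ = Σ_n p_n P_n (a mixture of the spectral projections of H) is a fixed point: Φ(ρ) = ρ. -/
open Matrix Kronecker ComplexOrder

/-- Completely positive map, via Kraus representation (equivalent in finite dimension). -/
def IsCP {d : Type*} [Fintype d] [DecidableEq d]
    (Φ : Matrix d d ℂ → Matrix d d ℂ) : Prop :=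
  ∃ (m : ℕ) (K : Fin m → Matrix d d ℂ), ∀ A, Φ A = ∑ i, K i * A * (K i)ᴴ

def IsTP {d : Type*} [Fintype d] [DecidableEq d]
    (Φ : Matrix d d ℂ → Matrix d d ℂ) : Prop :=
  ∀ A, (Φ A).trace = A.trace

def IsUnital {d : Type*} [Fintype d] [DecidableEq d]
    (Φ : Matrix d d ℂ → Matrix d d ℂ) : Prop :=
  Φ 1 = 1

/-- `Φd` is the Heisenberg dual of `Φ`, defined by trace duality. -/
def IsDual {d : Type*} [Fintype d] [DecidableEq d]
    (Φ Φd : Matrix d d ℂ → Matrix d d ℂ) : Prop :=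
  ∀ A B, (A * Φ B).trace = (Φd A * B).trace

/-! Write `Φ A = ∑ i, K i * A * (K i)ᴴ` with `∑ i, K i * (K i)ᴴ = 1`. Trace preservation and
`tr (H * Φ H) = tr (Φd H * H) = tr (H * H)` make the traces of the Kadison–Schwarz defect
`Φ (H * H) - Φ H * Φ H` and of `(Φ H - H)ᴴ * (Φ H - H)` add up to zero. Both are sums of squares
`Xᴴ * X`, so `Φ H = H` and every Kraus operator commutes with `H`, hence with its spectral
projections and with `ρ`; then `Φ ρ = ∑ i, ρ * K i * (K i)ᴴ = ρ`. -/

def krausMap {d ι : Type*} [Fintype d] [Fintype ι] (K : ι → Matrix d d ℂ)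
    (A : Matrix d d ℂ) : Matrix d d ℂ :=
  ∑ i, K i * A * (K i)ᴴ

section Kraus

variable {d ι : Type*} [Fintype d] [Fintype ι] (K : ι → Matrix d d ℂ)

theorem krausMap_conjTranspose (A : Matrix d d ℂ) : krausMap K Aᴴ = (krausMap K A)ᴴ := by
  simp only [krausMap, conjTranspose_sum, conjTranspose_mul, conjTranspose_conjTranspose,
    mul_assoc]

variable [DecidableEq d]

/-- The defect in the Kadison–Schwarz inequality `Φ(A)ᴴ Φ(A) ≤ Φ(Aᴴ A)` of a unital Kraus map,
written as a sum of squares. -/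
theorem krausMap_conjTranspose_mul_self_sub_eq_sum (hK : ∑ i, K i * (K i)ᴴ = 1)
    (A : Matrix d d ℂ) :
    ∑ i, (A * (K i)ᴴ - (K i)ᴴ * krausMap K A)ᴴ * (A * (K i)ᴴ - (K i)ᴴ * krausMap K A) =
      krausMap K (Aᴴ * A) - (krausMap K A)ᴴ * krausMap K A := by
  set C := krausMap K A
  have hterm : ∀ i, (A * (K i)ᴴ - (K i)ᴴ * C)ᴴ * (A * (K i)ᴴ - (K i)ᴴ * C) =
      K i * (Aᴴ * A) * (K i)ᴴ - K i * Aᴴ * (K i)ᴴ * C - Cᴴ * (K i * A * (K i)ᴴ) +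
        Cᴴ * (K i * (K i)ᴴ) * C := by
    intro i
    simp only [conjTranspose_sub, conjTranspose_mul, conjTranspose_conjTranspose]
    noncomm_ring
  simp only [hterm, Finset.sum_add_distrib, Finset.sum_sub_distrib, ← Finset.sum_mul,
    ← Finset.mul_sum, ← Finset.sum_mul, hK]
  rw [← krausMap, ← krausMap, ← krausMap, krausMap_conjTranspose]
  noncomm_ring

theorem krausMap_eq_self_of_commute (hK : ∑ i, K i * (K i)ᴴ = 1) {ρ : Matrix d d ℂ}
    (hρ : ∀ i, Commute (K i) ρ) : krausMap K ρ = ρ := by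
  calc krausMap K ρ = ∑ i, ρ * (K i * (K i)ᴴ) := by
        simp only [krausMap, (hρ _).eq, mul_assoc]
    _ = ρ := by rw [← Finset.mul_sum, hK, mul_one]

end Kraus

section SpectralProjections

variable {𝕜 A ι : Type*} [Field 𝕜] [Ring A] [Algebra 𝕜 A] [Fintype ι] [DecidableEq ι]
  {P : ι → A} {lam : ι → 𝕜}

theorem proj_mul_sum_smul (hPorth : ∀ a b, P a * P b = if a = b then P a else 0) (a : ι) :
    P a * ∑ m, lam m • P m = lam a • P a := by
  simp [Finset.mul_sum, hPorth]

theorem sum_smul_mul_proj (hPorth : ∀ a b, P a * P b = if a = b then P a else 0) (b : ι) :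
    (∑ m, lam m • P m) * P b = lam b • P b := by
  simp [Finset.sum_mul, hPorth]

theorem proj_mul_mul_proj_eq_zero_of_commute_sum_smul (hlam : Function.Injective lam)
    (hPorth : ∀ a b, P a * P b = if a = b then P a else 0) {K : A}
    (hK : Commute K (∑ m, lam m • P m)) {a b : ι} (hab : a ≠ b) : P a * K * P b = 0 := by
  have hcomm : lam a • (P a * K * P b) = lam b • (P a * K * P b) := by
    calc lam a • (P a * K * P b) = P a * (∑ m, lam m • P m) * K * P b := by
          rw [proj_mul_sum_smul hPorth, smul_mul_assoc, smul_mul_assoc]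
      _ = P a * K * ((∑ m, lam m • P m) * P b) := by
          rw [mul_assoc (P a), ← hK.eq]; noncomm_ring
      _ = lam b • (P a * K * P b) := by rw [sum_smul_mul_proj hPorth, mul_smul_comm]
  rw [← sub_eq_zero, ← sub_smul] at hcomm
  exact (smul_eq_zero.mp hcomm).resolve_left (sub_ne_zero.mpr (hlam.ne hab))

theorem commute_proj_of_commute_sum_smul (hlam : Function.Injective lam)
    (hPorth : ∀ a b, P a * P b = if a = b then P a else 0) (hPsum : ∑ m, P m = 1) {K : A}
    (hK : Commute K (∑ m, lam m • P m)) (b : ι) : Commute K (P b) := by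
  have hoff {a b : ι} (hab : a ≠ b) : P a * K * P b = 0 :=
    proj_mul_mul_proj_eq_zero_of_commute_sum_smul hlam hPorth hK hab
  calc K * P b = (∑ a, P a) * K * P b := by rw [hPsum, one_mul]
    _ = P b * K * P b := by
        rw [Finset.sum_mul, Finset.sum_mul, Fintype.sum_eq_single b fun a ha => hoff ha]
    _ = P b * K * ∑ a, P a := by
        rw [Finset.mul_sum, Fintype.sum_eq_single b fun a ha => hoff (Ne.symm ha)]
    _ = P b * K := by rw [hPsum, mul_one]

end SpectralProjections

theorem commute_kraus_of_trace_mul_krausMap_eq {d ι : Type*} [Fintype d] [DecidableEq d]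
    [Fintype ι] {K : ι → Matrix d d ℂ} (hK : ∑ i, K i * (K i)ᴴ = 1)
    (hTP : ∀ A, (krausMap K A).trace = A.trace) {H : Matrix d d ℂ} (hH : H.IsHermitian)
    (hHC : (H * krausMap K H).trace = (H * H).trace) (i : ι) : Commute (K i) H := by
  have hdefect := krausMap_conjTranspose_mul_self_sub_eq_sum K hK H
  have hC : (krausMap K H)ᴴ = krausMap K H := by rw [← krausMap_conjTranspose, hH.eq]
  generalize krausMap K H = C at hdefect hHC hC
  rw [hH.eq, hC] at hdefect
  have hdiff : (C - H)ᴴ * (C - H) = C * C - C * H - H * C + H * H := by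
    simp only [conjTranspose_sub, hC, hH.eq]
    noncomm_ring
  have htrace : ∑ i, ((H * (K i)ᴴ - (K i)ᴴ * C)ᴴ * (H * (K i)ᴴ - (K i)ᴴ * C)).trace +
      ((C - H)ᴴ * (C - H)).trace = 0 := by
    rw [← trace_sum, hdefect, hdiff]
    simp only [trace_sub, trace_add]
    rw [hTP, trace_mul_comm C H, hHC]
    ring
  have hnonneg (X : Matrix d d ℂ) : 0 ≤ (Xᴴ * X).trace :=
    (posSemidef_conjTranspose_mul_self X).trace_nonneg
  obtain ⟨hDsum, hCH⟩ :=
    (add_eq_zero_iff_of_nonneg (Finset.sum_nonneg fun i _ => hnonneg _) (hnonneg _)).mp htrace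
  rw [trace_conjTranspose_mul_self_eq_zero_iff, sub_eq_zero] at hCH
  have hDi := (Finset.sum_eq_zero_iff_of_nonneg fun i _ => hnonneg _).mp hDsum i
    (Finset.mem_univ i)
  rw [trace_conjTranspose_mul_self_eq_zero_iff, hCH, sub_eq_zero] at hDi
  rw [← commute_star_star, hH.star_eq]
  exact hDi.symm

theorem bistochastic_fixes_spectral_mixtures_general {n M : ℕ}
    (Φ Φd : Matrix (Fin n) (Fin n) ℂ → Matrix (Fin n) (Fin n) ℂ)
    (hCP : IsCP Φ) (hTP : IsTP Φ) (hU : IsUnital Φ)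
    (hDual : IsDual Φ Φd)
    (H : Matrix (Fin n) (Fin n) ℂ) (hH : H.IsHermitian)
    (lam : Fin M → ℝ) (hlam : Function.Injective lam)
    (P : Fin M → Matrix (Fin n) (Fin n) ℂ)
    (hPorth : ∀ m m', P m * P m' = if m = m' then P m else 0)
    (hPsum : ∑ m, P m = 1)
    (hspec : H = ∑ m, (lam m : ℂ) • P m)
    (hfix : Φd H = H)
    (p : Fin M → ℝ)
    (ρ : Matrix (Fin n) (Fin n) ℂ) (hρ : ρ = ∑ m, (p m : ℂ) • P m) :
    Φ ρ = ρ := by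
  obtain ⟨k, K, hΦ⟩ := hCP
  obtain rfl : Φ = krausMap K := funext hΦ
  have hK : ∑ i, K i * (K i)ᴴ = 1 := by simpa [IsUnital, krausMap] using hU
  have hKH : ∀ i, Commute (K i) H :=
    commute_kraus_of_trace_mul_krausMap_eq hK hTP hH (by rw [hDual, hfix])
  have hKP (i : Fin k) (m : Fin M) : Commute (K i) (P m) :=
    commute_proj_of_commute_sum_smul (lam := fun m => (lam m : ℂ))
      (Complex.ofReal_injective.comp hlam) hPorth hPsum (hspec ▸ hKH i) m
  rw [hρ]
  exact krausMap_eq_self_of_commute K hK fun i =>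
    Commute.sum_right _ _ _ fun m _ => (hKP i m).smul_right _

/-- If `Φ` is a bistochastic channel with `Φd H = H` for a self-adjoint `H`
with spectral decomposition `H = Σ_m λ_m P_m` (distinct real eigenvalues `λ_m`, orthogonal
spectral projections `P_m` summing to the identity), then every state of the form
`ρ = Σ_m p_m P_m` with `p_m ≥ 0` and `Σ_m p_m tr[P_m] = 1` is a fixed point: `Φ ρ = ρ`. -/
theorem bistochastic_fixes_spectral_mixtures {n M : ℕ}
    (Φ Φd : Matrix (Fin n) (Fin n) ℂ → Matrix (Fin n) (Fin n) ℂ)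
    (hCP : IsCP Φ) (hTP : IsTP Φ) (hU : IsUnital Φ)
    (hdCP : IsCP Φd) (hdTP : IsTP Φd) (hdU : IsUnital Φd)
    (hDual : IsDual Φ Φd)
    (H : Matrix (Fin n) (Fin n) ℂ) (hH : H.IsHermitian)
    (lam : Fin M → ℝ) (hlam : Function.Injective lam)
    (P : Fin M → Matrix (Fin n) (Fin n) ℂ)
    (hPherm : ∀ m, (P m).IsHermitian)
    (hPorth : ∀ m m', P m * P m' = if m = m' then P m else 0)
    (hPsum : ∑ m, P m = 1)
    (hspec : H = ∑ m, (lam m : ℂ) • P m)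
    (hfix : Φd H = H)
    (p : Fin M → ℝ) (hp : ∀ m, 0 ≤ p m)
    (hnorm : ∑ m, p m * ((P m).trace).re = 1)
    (ρ : Matrix (Fin n) (Fin n) ℂ) (hρ : ρ = ∑ m, (p m : ℂ) • P m) :
    Φ ρ = ρ :=
  bistochastic_fixes_spectral_mixtures_general Φ Φd hCP hTP hU hDual H hH lam hlam P hPorth hPsum
    hspec hfix p ρ hρ
end

section
/- Every operation of a thermal instrument preserves the Gibbs state proportionally: if I = {I_x} is a thermal E-instrument at inverse temperature β, then I_x(τ_β) = tr[E_x τ_β] τ_β for every outcome x, where τ_β is the Gibbs state of the system Hamiltonian H_S. -/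
open Matrix Kronecker ComplexOrder

/-- Gibbs state `e^{-βH}/tr[e^{-βH}]`. -/
noncomputable def gibbs {d : Type*} [Fintype d] [DecidableEq d]
    (H : Matrix d d ℂ) (β : ℝ) : Matrix d d ℂ :=
  ((NormedSpace.exp ((-β : ℂ) • H)).trace)⁻¹ • NormedSpace.exp ((-β : ℂ) • H)

/-- Partial trace over the second (probe) factor. -/
noncomputable def ptraceA {ns na : ℕ}
    (M : Matrix (Fin ns × Fin na) (Fin ns × Fin na) ℂ) : Matrix (Fin ns) (Fin ns) ℂ :=
  fun i j => ∑ k, M (i, k) (j, k)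

/-! Write `E A = ∑ Kᵢ A Kᵢᴴ`. Trace duality forces `Ed A = ∑ Kᵢᴴ A Kᵢ`, while unitality and trace
preservation of `E` say `∑ Kᵢ Kᵢᴴ = 1 = ∑ Kᵢᴴ Kᵢ`. For the Hermitian total Hamiltonian `H`, fixed by
`Ed`, the positive matrix `∑ [Kᵢ, H]ᴴ [Kᵢ, H]` equals `Ed (H²) - H²`, which has trace zero; so every
Kraus operator commutes with `H`, hence with its Gibbs state `τ_β ⊗ ξ_β`, and `E` fixes that state.
Finally the partial trace of `(1 ⊗ Z_x)(τ_β ⊗ ξ_β)` is `tr[Z_x ξ_β] τ_β`. -/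

section KrausMap

variable {d ι : Type*} [Fintype d] [Fintype ι] {K : ι → Matrix d d ℂ}

theorem trace_mul_sum_mul_mul_conjTranspose (A B : Matrix d d ℂ) :
    (A * ∑ i, K i * B * (K i)ᴴ).trace = ((∑ i, (K i)ᴴ * A * K i) * B).trace := by
  simp only [Finset.mul_sum, Finset.sum_mul, trace_sum]
  refine Finset.sum_congr rfl fun i _ => ?_
  rw [← Matrix.mul_assoc, ← Matrix.mul_assoc, trace_mul_comm]
  simp only [Matrix.mul_assoc]

variable [DecidableEq d] {Φ : Matrix d d ℂ → Matrix d d ℂ}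

theorem sum_mul_conjTranspose_eq_one_of_isUnital (hΦ : ∀ A, Φ A = ∑ i, K i * A * (K i)ᴴ)
    (h : IsUnital Φ) : ∑ i, K i * (K i)ᴴ = 1 := by
  simpa [IsUnital, hΦ] using h

theorem sum_conjTranspose_mul_eq_one_of_isTP (hΦ : ∀ A, Φ A = ∑ i, K i * A * (K i)ᴴ)
    (h : IsTP Φ) : ∑ i, (K i)ᴴ * K i = 1 := by
  refine ext_iff_trace_mul_right.mpr fun B => ?_
  rw [Matrix.one_mul, ← h B, hΦ, ← Matrix.one_mul (∑ i, K i * B * (K i)ᴴ),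
    trace_mul_sum_mul_mul_conjTranspose]
  simp only [Matrix.mul_one]

theorem IsDual.eq_sum_conjTranspose_mul_mul {Φd : Matrix d d ℂ → Matrix d d ℂ}
    (hΦ : ∀ A, Φ A = ∑ i, K i * A * (K i)ᴴ) (h : IsDual Φ Φd) (A : Matrix d d ℂ) :
    Φd A = ∑ i, (K i)ᴴ * A * K i := by
  refine ext_iff_trace_mul_right.mpr fun B => ?_
  rw [← h, hΦ, trace_mul_sum_mul_mul_conjTranspose]

theorem sum_mul_mul_conjTranspose_eq_self_of_commute (hK : ∑ i, K i * (K i)ᴴ = 1)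
    {X : Matrix d d ℂ} (hX : ∀ i, Commute (K i) X) : ∑ i, K i * X * (K i)ᴴ = X := by
  simp_rw [(hX _).eq, Matrix.mul_assoc, ← Finset.mul_sum, hK, Matrix.mul_one]

theorem sum_commutator_conjTranspose_mul_commutator (hK : ∑ i, (K i)ᴴ * K i = 1)
    {C : Matrix d d ℂ} (hC : C.IsHermitian) (hfix : ∑ i, (K i)ᴴ * C * K i = C) :
    ∑ i, (K i * C - C * K i)ᴴ * (K i * C - C * K i) = ∑ i, (K i)ᴴ * (C * C) * K i - C * C := by
  have hterm : ∀ i, (K i * C - C * K i)ᴴ * (K i * C - C * K i)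
      = C * ((K i)ᴴ * K i) * C - C * ((K i)ᴴ * C * K i) - (K i)ᴴ * C * K i * C
        + (K i)ᴴ * (C * C) * K i := by
    intro i
    simp only [conjTranspose_sub, conjTranspose_mul, hC.eq]
    noncomm_ring
  simp only [hterm, Finset.sum_add_distrib, Finset.sum_sub_distrib, ← Finset.sum_mul,
    ← Finset.mul_sum, hK, hfix]
  noncomm_ring

theorem commute_of_sum_conjTranspose_mul_mul_eq_self (hK : ∑ i, (K i)ᴴ * K i = 1)
    (hK' : ∑ i, K i * (K i)ᴴ = 1) {C : Matrix d d ℂ} (hC : C.IsHermitian)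
    (hfix : ∑ i, (K i)ᴴ * C * K i = C) (i : ι) : Commute (K i) C := by
  have hsquare : (∑ j, (K j)ᴴ * (C * C) * K j).trace = (C * C).trace := by
    simpa [hK'] using (trace_mul_sum_mul_mul_conjTranspose (K := K) (C * C) 1).symm
  have htrace : ∑ j, ((K j * C - C * K j)ᴴ * (K j * C - C * K j)).trace = 0 := by
    rw [← trace_sum, sum_commutator_conjTranspose_mul_commutator hK hC hfix, trace_sub, hsquare,
      sub_self]
  have hzero := (Finset.sum_eq_zero_iff_of_nonneg fun j _ =>
    (posSemidef_conjTranspose_mul_self (K j * C - C * K j)).trace_nonneg).mp htrace i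
    (Finset.mem_univ i)
  exact sub_eq_zero.mp (trace_conjTranspose_mul_self_eq_zero_iff.mp hzero)

end KrausMap

section KroneckerExp

variable {m n : Type*} [Fintype m] [DecidableEq m] [Fintype n] [DecidableEq n]

theorem Matrix.map_exp_of_algHom (f : Matrix m m ℂ →ₐ[ℂ] Matrix n n ℂ) (X : Matrix m m ℂ) :
    f (NormedSpace.exp X) = NormedSpace.exp (f X) :=
  open scoped Norms.Operator in
  NormedSpace.map_exp f f.toLinearMap.continuous_of_finiteDimensional X

theorem Matrix.exp_kronecker_one (X : Matrix m m ℂ) :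
    NormedSpace.exp (X ⊗ₖ (1 : Matrix n n ℂ)) = NormedSpace.exp X ⊗ₖ (1 : Matrix n n ℂ) := by
  simpa using (map_exp_of_algHom
    ((kroneckerAlgEquiv m n ℂ).toAlgHom.comp Algebra.TensorProduct.includeLeft) X).symm

theorem Matrix.exp_one_kronecker (Y : Matrix n n ℂ) :
    NormedSpace.exp ((1 : Matrix m m ℂ) ⊗ₖ Y) = (1 : Matrix m m ℂ) ⊗ₖ NormedSpace.exp Y := by
  simpa using (map_exp_of_algHom
    ((kroneckerAlgEquiv m n ℂ).toAlgHom.comp Algebra.TensorProduct.includeRight) Y).symm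

theorem Matrix.exp_kronecker_one_add_one_kronecker (X : Matrix m m ℂ) (Y : Matrix n n ℂ) :
    NormedSpace.exp (X ⊗ₖ (1 : Matrix n n ℂ) + (1 : Matrix m m ℂ) ⊗ₖ Y)
      = NormedSpace.exp X ⊗ₖ NormedSpace.exp Y := by
  have hcomm : Commute (X ⊗ₖ (1 : Matrix n n ℂ)) ((1 : Matrix m m ℂ) ⊗ₖ Y) := by
    simp only [Commute, SemiconjBy, ← mul_kronecker_mul, Matrix.one_mul, Matrix.mul_one]
  rw [exp_add_of_commute _ _ hcomm, exp_kronecker_one, exp_one_kronecker, ← mul_kronecker_mul,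
    Matrix.mul_one, Matrix.one_mul]

theorem gibbs_kronecker_gibbs (HS : Matrix m m ℂ) (HA : Matrix n n ℂ) (β : ℝ) :
    gibbs HS β ⊗ₖ gibbs HA β = gibbs (HS ⊗ₖ 1 + 1 ⊗ₖ HA) β := by
  rw [gibbs, gibbs, gibbs, smul_add, ← smul_kronecker, ← kronecker_smul,
    exp_kronecker_one_add_one_kronecker, trace_kronecker, smul_kronecker, kronecker_smul,
    smul_smul, mul_inv]

end KroneckerExp

section GibbsState

variable {d : Type*} [Fintype d] [DecidableEq d]

theorem Commute.gibbs_right {K H : Matrix d d ℂ} (h : Commute K H) (β : ℝ) :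
    Commute K (gibbs H β) :=
  ((h.smul_right _).exp_right).smul_right _

theorem trace_gibbs_smul_gibbs (H : Matrix d d ℂ) (β : ℝ) :
    (gibbs H β).trace • gibbs H β = gibbs H β := by
  by_cases htrace : (NormedSpace.exp ((-β : ℂ) • H)).trace = 0
  · rw [gibbs, htrace, _root_.inv_zero, zero_smul, smul_zero]
  · rw [gibbs, trace_smul, smul_eq_mul, inv_mul_cancel₀ htrace, one_smul]

end GibbsState

theorem ptraceA_kronecker {ns na : ℕ} (A : Matrix (Fin ns) (Fin ns) ℂ)
    (B : Matrix (Fin na) (Fin na) ℂ) : ptraceA (A ⊗ₖ B) = B.trace • A := by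
  ext i j
  simp only [ptraceA, kroneckerMap_apply, Matrix.smul_apply, trace, diag_apply, smul_eq_mul,
    Finset.sum_mul]
  exact Finset.sum_congr rfl fun _ _ => mul_comm _ _

theorem thermal_instrument_gibbs_preserving_general {ns na N : ℕ}
    (HS : Matrix (Fin ns) (Fin ns) ℂ) (hHS : HS.IsHermitian)
    (HA : Matrix (Fin na) (Fin na) ℂ) (hHA : HA.IsHermitian)
    (β : ℝ)
    (E Ed : Matrix (Fin ns × Fin na) (Fin ns × Fin na) ℂ →
            Matrix (Fin ns × Fin na) (Fin ns × Fin na) ℂ)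
    (hCP : IsCP E) (hTP : IsTP E) (hU : IsUnital E)
    (hDual : IsDual E Ed)
    (hfix : Ed (HS ⊗ₖ 1 + 1 ⊗ₖ HA) = HS ⊗ₖ 1 + 1 ⊗ₖ HA)
    (Z : Fin N → Matrix (Fin na) (Fin na) ℂ)
    (Inst : Fin N → Matrix (Fin ns) (Fin ns) ℂ → Matrix (Fin ns) (Fin ns) ℂ)
    (hInst : ∀ x ρ, Inst x ρ = ptraceA ((1 ⊗ₖ Z x) * E (ρ ⊗ₖ gibbs HA β)))
    :
    ∀ x, Inst x (gibbs HS β) = (Inst x (gibbs HS β)).trace • gibbs HS β := by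
  intro x
  obtain ⟨m, K, hE⟩ := hCP
  have hunital := sum_mul_conjTranspose_eq_one_of_isUnital hE hU
  have hH : (HS ⊗ₖ 1 + 1 ⊗ₖ HA).IsHermitian := by
    simp only [IsHermitian, conjTranspose_add, conjTranspose_kronecker, conjTranspose_one,
      hHS.eq, hHA.eq]
  have hcomm : ∀ i, Commute (K i) (HS ⊗ₖ 1 + 1 ⊗ₖ HA) :=
    commute_of_sum_conjTranspose_mul_mul_eq_self (sum_conjTranspose_mul_eq_one_of_isTP hE hTP)
      hunital hH (hDual.eq_sum_conjTranspose_mul_mul hE _ ▸ hfix)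
  have hgibbs_fixed : E (gibbs HS β ⊗ₖ gibbs HA β) = gibbs HS β ⊗ₖ gibbs HA β := by
    rw [gibbs_kronecker_gibbs, hE]
    exact sum_mul_mul_conjTranspose_eq_self_of_commute hunital fun i => (hcomm i).gibbs_right β
  rw [hInst, hgibbs_fixed, ← mul_kronecker_mul, Matrix.one_mul, ptraceA_kronecker, trace_smul,
    smul_eq_mul, mul_smul, trace_gibbs_smul_gibbs]

/-- Every operation of a thermal instrument preserves the Gibbs state
proportionally: `I_x(τ_β) = tr[E_x τ_β] τ_β`, where `tr[E_x τ_β] = tr[I_x(τ_β)]`. -/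
theorem thermal_instrument_gibbs_preserving {ns na N : ℕ}
    (HS : Matrix (Fin ns) (Fin ns) ℂ) (hHS : HS.IsHermitian)
    (HA : Matrix (Fin na) (Fin na) ℂ) (hHA : HA.IsHermitian)
    (β : ℝ) (hβ : 0 < β)
    (E Ed : Matrix (Fin ns × Fin na) (Fin ns × Fin na) ℂ →
            Matrix (Fin ns × Fin na) (Fin ns × Fin na) ℂ)
    (hCP : IsCP E) (hTP : IsTP E) (hU : IsUnital E)
    (hdCP : IsCP Ed) (hdTP : IsTP Ed) (hdU : IsUnital Ed)
    (hDual : IsDual E Ed)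
    (hfix : Ed (HS ⊗ₖ 1 + 1 ⊗ₖ HA) = HS ⊗ₖ 1 + 1 ⊗ₖ HA)
    (Z : Fin N → Matrix (Fin na) (Fin na) ℂ)
    (hZpos : ∀ x, (Z x).PosSemidef) (hZsum : ∑ x, Z x = 1)
    (hYanase : ∀ x, Z x * HA = HA * Z x)
    (Inst : Fin N → Matrix (Fin ns) (Fin ns) ℂ → Matrix (Fin ns) (Fin ns) ℂ)
    (hInst : ∀ x ρ, Inst x ρ = ptraceA ((1 ⊗ₖ Z x) * E (ρ ⊗ₖ gibbs HA β)))
    :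
    ∀ x, Inst x (gibbs HS β) = (Inst x (gibbs HS β)).trace • gibbs HS β :=
  thermal_instrument_gibbs_preserving_general HS hHS HA hHA β E Ed hCP hTP hU hDual hfix Z Inst
    hInst
end

section
/- Every operation of a thermal instrument is time-translation covariant: if I = {I_x} is a thermal instrument for system Hamiltonian H_S, then I_x(e^{−it H_S} ρ e^{it H_S}) = e^{−it H_S} I_x(ρ) e^{it H_S} for all states ρ, outcomes x, and times t. -/
open Matrix Kronecker ComplexOrder

/-- The unitary one-parameter group `e^{-itH}`. -/
noncomputable def timeEv {d : Type*} [Fintype d] [DecidableEq d]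
    (H : Matrix d d ℂ) (t : ℝ) : Matrix d d ℂ :=
  NormedSpace.exp ((-(Complex.I * t)) • H)

/-- The inverse unitary `e^{itH}`. -/
noncomputable def timeEvInv {d : Type*} [Fintype d] [DecidableEq d]
    (H : Matrix d d ℂ) (t : ℝ) : Matrix d d ℂ :=
  NormedSpace.exp ((Complex.I * t) • H)

/-!
Let `H = H_S ⊗ 1 + 1 ⊗ H_A`. For Kraus operators `Kᵢ` of the dual channel, unitality and trace
preservation give `∑ᵢ tr[(KᵢH - HKᵢ)(KᵢH - HKᵢ)ᴴ] = tr[Ed(H²)] - tr[H²] = 0` once `Ed` fixes `H`,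
so every `Kᵢ` commutes with `H`. Hence `Ed`, and by trace duality `E`, commutes with conjugation by
`e^{-itH} = e^{-itH_S} ⊗ e^{-itH_A}`. The Gibbs state is invariant under the probe factor, the
pointer commutes with it by the Yanase condition, and the probe factor then cancels in the partial
trace.
-/

open NormedSpace

namespace Matrix

variable {m n : Type*} [Fintype m] [DecidableEq m] [Fintype n] [DecidableEq n]

theorem exp_reindex (e : m ≃ n) (A : Matrix m m ℂ) :
    exp (reindex e e A) = reindex e e (exp A) := by
  open scoped Norms.Operator in
  exact (map_exp (reindexAlgEquiv ℂ ℂ e) (continuous_id.matrix_reindex e e) A).symm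

theorem exp_kronecker_one_s6 (A : Matrix m m ℂ) :
    exp (A ⊗ₖ (1 : Matrix n n ℂ)) = exp A ⊗ₖ (1 : Matrix n n ℂ) := by
  open scoped Norms.Operator in
  rw [kronecker_one, kronecker_one, exp_blockDiagonal]
  exact congrArg blockDiagonal (Pi.exp_def _)

theorem exp_one_kronecker_s6 (B : Matrix n n ℂ) :
    exp ((1 : Matrix m m ℂ) ⊗ₖ B) = (1 : Matrix m m ℂ) ⊗ₖ exp B := by
  open scoped Norms.Operator in
  rw [one_kronecker, one_kronecker, exp_reindex, exp_blockDiagonal]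
  exact congrArg (fun M => reindex _ _ (blockDiagonal M)) (Pi.exp_def _)

theorem exp_kroneckerSum (A : Matrix m m ℂ) (B : Matrix n n ℂ) :
    exp (A ⊗ₖ (1 : Matrix n n ℂ) + (1 : Matrix m m ℂ) ⊗ₖ B) = exp A ⊗ₖ exp B := by
  have hAB : Commute (A ⊗ₖ (1 : Matrix n n ℂ)) ((1 : Matrix m m ℂ) ⊗ₖ B) := by
    simp only [Commute, SemiconjBy, ← mul_kronecker_mul, mul_one, one_mul]
  rw [exp_add_of_commute _ _ hAB, exp_kronecker_one_s6, exp_one_kronecker_s6, ← mul_kronecker_mul,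
    mul_one, one_mul]

end Matrix

section KrausCovariance

variable {d ι : Type*} [Fintype d] [Fintype ι]
  {Φ : Matrix d d ℂ → Matrix d d ℂ} {K : ι → Matrix d d ℂ}

theorem commute_kraus_of_map_eq_self [DecidableEq d] (hK : ∀ A, Φ A = ∑ i, K i * A * (K i)ᴴ)
    (hTP : IsTP Φ) (hU : IsUnital Φ) {H : Matrix d d ℂ} (hH : H.IsHermitian) (hfix : Φ H = H)
    (i : ι) : Commute (K i) H := by
  set D : ι → Matrix d d ℂ := fun i => K i * H - H * K i
  have hsum : ∑ i, D i * (D i)ᴴ = Φ (H * H) - Φ H * H - H * Φ H + H * Φ 1 * H := by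
    simp only [hK, Finset.mul_sum, Finset.sum_mul, ← Finset.sum_sub_distrib,
      ← Finset.sum_add_distrib]
    refine Finset.sum_congr rfl fun i _ => ?_
    simp only [D, conjTranspose_sub, conjTranspose_mul, hH.eq]
    noncomm_ring
  have htrace : ∑ i, (D i * (D i)ᴴ).trace = 0 := by
    rw [← trace_sum, hsum, hfix, hU, mul_one, trace_add, trace_sub, trace_sub, hTP,
      trace_mul_comm H]
    ring
  have hD : (D i * (D i)ᴴ).trace = 0 :=
    (Finset.sum_eq_zero_iff_of_nonneg fun j _ =>
      (posSemidef_self_mul_conjTranspose (D j)).trace_nonneg).mp htrace i (Finset.mem_univ i)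
  exact sub_eq_zero.mp (trace_mul_conjTranspose_self_eq_zero_iff.mp hD)

theorem map_mul_mul_of_commute_kraus (hK : ∀ A, Φ A = ∑ i, K i * A * (K i)ᴴ)
    {U W : Matrix d d ℂ} (hU : ∀ i, Commute (K i) U) (hW : ∀ i, Commute (K i)ᴴ W)
    (A : Matrix d d ℂ) : Φ (U * A * W) = U * Φ A * W := by
  simp only [hK, Finset.mul_sum, Finset.sum_mul]
  refine Finset.sum_congr rfl fun i _ => ?_
  rw [← mul_assoc, ← mul_assoc, (hU i).eq, mul_assoc _ W, ← (hW i).eq]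
  noncomm_ring

end KrausCovariance

theorem IsDual.map_mul_mul {d : Type*} [Fintype d] [DecidableEq d]
    {Φ Φd : Matrix d d ℂ → Matrix d d ℂ} (hΦ : IsDual Φ Φd) {V W : Matrix d d ℂ}
    (hΦd : ∀ A, Φd (W * A * V) = W * Φd A * V) (X : Matrix d d ℂ) :
    Φ (V * X * W) = V * Φ X * W := by
  refine Matrix.ext_iff_trace_mul_left.mpr fun A => ?_
  calc (A * Φ (V * X * W)).trace = (Φd A * (V * X * W)).trace := hΦ _ _
    _ = (W * Φd A * V * X).trace := by
      rw [← mul_assoc, ← mul_assoc, trace_mul_comm, ← mul_assoc, ← mul_assoc]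
    _ = (W * A * V * Φ X).trace := by rw [← hΦd, hΦ]
    _ = (A * (V * Φ X * W)).trace := by
      rw [mul_assoc, mul_assoc, trace_mul_comm, mul_assoc, mul_assoc]

section TimeEvolution

variable {d : Type*} [Fintype d] [DecidableEq d]

theorem timeEvInv_mul_timeEv (H : Matrix d d ℂ) (t : ℝ) : timeEvInv H t * timeEv H t = 1 := by
  rw [timeEv, timeEvInv, ← exp_add_of_commute _ _ ((Commute.refl H).smul_left _ |>.smul_right _),
    ← add_smul, add_neg_cancel, zero_smul, exp_zero]

theorem timeEv_mul_timeEvInv (H : Matrix d d ℂ) (t : ℝ) : timeEv H t * timeEvInv H t = 1 := by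
  rw [timeEv, timeEvInv, ← exp_add_of_commute _ _ ((Commute.refl H).smul_left _ |>.smul_right _),
    ← add_smul, neg_add_cancel, zero_smul, exp_zero]

theorem Commute.timeEv {A H : Matrix d d ℂ} (h : Commute A H) (t : ℝ) :
    Commute A (timeEv H t) :=
  (h.smul_right _).exp_right

theorem Commute.timeEvInv {A H : Matrix d d ℂ} (h : Commute A H) (t : ℝ) :
    Commute A (timeEvInv H t) :=
  (h.smul_right _).exp_right

theorem timeEv_mul_gibbs_mul_timeEvInv (H : Matrix d d ℂ) (β t : ℝ) :
    timeEv H t * gibbs H β * timeEvInv H t = gibbs H β := by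
  have hc : Commute (gibbs H β) (timeEv H t) :=
    (((Commute.refl H).smul_left _).exp_left.smul_left _).timeEv t
  rw [← hc.eq, mul_assoc, timeEv_mul_timeEvInv, mul_one]

theorem map_timeEv_conj_of_dual_map_eq_self {Φ Φd : Matrix d d ℂ → Matrix d d ℂ}
    (hCP : IsCP Φd) (hTP : IsTP Φd) (hU : IsUnital Φd) (hΦ : IsDual Φ Φd)
    {H : Matrix d d ℂ} (hH : H.IsHermitian) (hfix : Φd H = H) (t : ℝ) (X : Matrix d d ℂ) :
    Φ (timeEv H t * X * timeEvInv H t) = timeEv H t * Φ X * timeEvInv H t := by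
  obtain ⟨_, K, hK⟩ := hCP
  have hKH := commute_kraus_of_map_eq_self hK hTP hU hH hfix
  have hKstarH : ∀ i, Commute (K i)ᴴ H := fun i => by
    simpa only [star_eq_conjTranspose, hH.eq] using (hKH i).star_star
  exact hΦ.map_mul_mul (map_mul_mul_of_commute_kraus hK (fun i => (hKH i).timeEvInv t)
    fun i => (hKstarH i).timeEv t) X

theorem timeEv_kroneckerSum {n : Type*} [Fintype n] [DecidableEq n]
    (A : Matrix d d ℂ) (B : Matrix n n ℂ) (t : ℝ) :
    timeEv (A ⊗ₖ 1 + 1 ⊗ₖ B) t = timeEv A t ⊗ₖ timeEv B t := by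
  rw [timeEv, smul_add, ← smul_kronecker, ← kronecker_smul, exp_kroneckerSum]; rfl

theorem timeEvInv_kroneckerSum {n : Type*} [Fintype n] [DecidableEq n]
    (A : Matrix d d ℂ) (B : Matrix n n ℂ) (t : ℝ) :
    timeEvInv (A ⊗ₖ 1 + 1 ⊗ₖ B) t = timeEvInv A t ⊗ₖ timeEvInv B t := by
  rw [timeEvInv, smul_add, ← smul_kronecker, ← kronecker_smul, exp_kroneckerSum]; rfl

end TimeEvolution

section PartialTrace

variable {ns na : ℕ}

theorem ptraceA_kronecker_one_mul (A : Matrix (Fin ns) (Fin ns) ℂ)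
    (M : Matrix (Fin ns × Fin na) (Fin ns × Fin na) ℂ) :
    ptraceA ((A ⊗ₖ (1 : Matrix (Fin na) (Fin na) ℂ)) * M) = A * ptraceA M := by
  ext i j
  simp only [ptraceA, mul_apply, Fintype.sum_prod_type, kroneckerMap_apply, one_apply, mul_ite,
    mul_one, mul_zero, ite_mul, zero_mul, Finset.sum_ite_eq, Finset.mem_univ, if_true,
    Finset.mul_sum]
  exact Finset.sum_comm

theorem ptraceA_mul_kronecker_one (M : Matrix (Fin ns × Fin na) (Fin ns × Fin na) ℂ)
    (A : Matrix (Fin ns) (Fin ns) ℂ) :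
    ptraceA (M * (A ⊗ₖ (1 : Matrix (Fin na) (Fin na) ℂ))) = ptraceA M * A := by
  ext i j
  simp only [ptraceA, mul_apply, Fintype.sum_prod_type, kroneckerMap_apply, one_apply, mul_ite,
    mul_one, mul_zero, Finset.sum_ite_eq', Finset.mem_univ, if_true, Finset.sum_mul]
  exact Finset.sum_comm

theorem ptraceA_one_kronecker_mul (B : Matrix (Fin na) (Fin na) ℂ)
    (M : Matrix (Fin ns × Fin na) (Fin ns × Fin na) ℂ) :
    ptraceA (((1 : Matrix (Fin ns) (Fin ns) ℂ) ⊗ₖ B) * M)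
      = ptraceA (M * ((1 : Matrix (Fin ns) (Fin ns) ℂ) ⊗ₖ B)) := by
  ext i j
  simp only [ptraceA, mul_apply, kroneckerMap_apply, one_apply, ite_mul, one_mul, zero_mul,
    Fintype.sum_prod_type, Finset.sum_ite_irrel, Finset.sum_const_zero, Finset.sum_ite_eq,
    Finset.mem_univ, ↓reduceIte, mul_ite, mul_zero, Finset.sum_ite_eq', mul_comm (B _ _)]
  exact Finset.sum_comm

theorem ptraceA_kronecker_mul_mul_kronecker (U U' : Matrix (Fin ns) (Fin ns) ℂ)
    {V V' : Matrix (Fin na) (Fin na) ℂ} (hV : V' * V = 1)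
    (M : Matrix (Fin ns × Fin na) (Fin ns × Fin na) ℂ) :
    ptraceA ((U ⊗ₖ V) * M * (U' ⊗ₖ V')) = U * ptraceA M * U' := by
  have hsplit : (U ⊗ₖ V) * M * (U' ⊗ₖ V')
      = (U ⊗ₖ 1) * ((1 ⊗ₖ V) * (M * (1 ⊗ₖ V'))) * (U' ⊗ₖ 1) := by
    simp only [← mul_assoc, ← mul_kronecker_mul, one_mul, mul_one]
    simp only [mul_assoc, ← mul_kronecker_mul, one_mul, mul_one]
  rw [hsplit, ptraceA_mul_kronecker_one, ptraceA_kronecker_one_mul, ptraceA_one_kronecker_mul,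
    mul_assoc M, ← mul_kronecker_mul, mul_one, hV, one_kronecker_one, mul_one, mul_assoc]

end PartialTrace

theorem thermal_instrument_covariant_general {ns na N : ℕ}
    (HS : Matrix (Fin ns) (Fin ns) ℂ) (hHS : HS.IsHermitian)
    (HA : Matrix (Fin na) (Fin na) ℂ) (hHA : HA.IsHermitian)
    (β : ℝ)
    (E Ed : Matrix (Fin ns × Fin na) (Fin ns × Fin na) ℂ →
            Matrix (Fin ns × Fin na) (Fin ns × Fin na) ℂ)
    (hdCP : IsCP Ed) (hdTP : IsTP Ed) (hdU : IsUnital Ed)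
    (hDual : IsDual E Ed)
    (hfix : Ed (HS ⊗ₖ 1 + 1 ⊗ₖ HA) = HS ⊗ₖ 1 + 1 ⊗ₖ HA)
    (Z : Fin N → Matrix (Fin na) (Fin na) ℂ)
    (hYanase : ∀ x, Z x * HA = HA * Z x)
    (Inst : Fin N → Matrix (Fin ns) (Fin ns) ℂ → Matrix (Fin ns) (Fin ns) ℂ)
    (hInst : ∀ x ρ, Inst x ρ = ptraceA ((1 ⊗ₖ Z x) * E (ρ ⊗ₖ gibbs HA β)))
    :
    ∀ (x : Fin N) (ρ : Matrix (Fin ns) (Fin ns) ℂ) (t : ℝ),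
      Inst x (timeEv HS t * ρ * timeEvInv HS t) =
        timeEv HS t * Inst x ρ * timeEvInv HS t := by
  intro x ρ t
  set H := HS ⊗ₖ 1 + 1 ⊗ₖ HA
  have hH : H.IsHermitian := by
    simp only [H, IsHermitian, conjTranspose_add, conjTranspose_kronecker (R := ℂ), hHS.eq, hHA.eq,
      conjTranspose_one]
  have hZH : Commute (1 ⊗ₖ Z x) H := by
    simp only [H, Commute, SemiconjBy, mul_add, add_mul, ← mul_kronecker_mul, one_mul, mul_one,
      hYanase x]
  have hstate : (timeEv HS t * ρ * timeEvInv HS t) ⊗ₖ gibbs HA β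
      = timeEv H t * (ρ ⊗ₖ gibbs HA β) * timeEvInv H t := by
    rw [timeEv_kroneckerSum, timeEvInv_kroneckerSum, ← mul_kronecker_mul, ← mul_kronecker_mul,
      timeEv_mul_gibbs_mul_timeEvInv]
  rw [hInst, hInst, hstate,
    map_timeEv_conj_of_dual_map_eq_self hdCP hdTP hdU hDual hH hfix, ← mul_assoc, ← mul_assoc,
    (hZH.timeEv t).eq, mul_assoc _ (1 ⊗ₖ Z x), timeEv_kroneckerSum, timeEvInv_kroneckerSum,
    ptraceA_kronecker_mul_mul_kronecker _ _ (timeEvInv_mul_timeEv HA t)]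

/-- Every operation of a thermal instrument is time-translation covariant:
`I_x(e^{-itH_S} ρ e^{itH_S}) = e^{-itH_S} I_x(ρ) e^{itH_S}` for all `ρ`, `x`, `t`. -/
theorem thermal_instrument_covariant {ns na N : ℕ}
    (HS : Matrix (Fin ns) (Fin ns) ℂ) (hHS : HS.IsHermitian)
    (HA : Matrix (Fin na) (Fin na) ℂ) (hHA : HA.IsHermitian)
    (β : ℝ) (hβ : 0 < β)
    (E Ed : Matrix (Fin ns × Fin na) (Fin ns × Fin na) ℂ →
            Matrix (Fin ns × Fin na) (Fin ns × Fin na) ℂ)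
    (hCP : IsCP E) (hTP : IsTP E) (hU : IsUnital E)
    (hdCP : IsCP Ed) (hdTP : IsTP Ed) (hdU : IsUnital Ed)
    (hDual : IsDual E Ed)
    (hfix : Ed (HS ⊗ₖ 1 + 1 ⊗ₖ HA) = HS ⊗ₖ 1 + 1 ⊗ₖ HA)
    (Z : Fin N → Matrix (Fin na) (Fin na) ℂ)
    (hZpos : ∀ x, (Z x).PosSemidef) (hZsum : ∑ x, Z x = 1)
    (hYanase : ∀ x, Z x * HA = HA * Z x)
    (Inst : Fin N → Matrix (Fin ns) (Fin ns) ℂ → Matrix (Fin ns) (Fin ns) ℂ)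
    (hInst : ∀ x ρ, Inst x ρ = ptraceA ((1 ⊗ₖ Z x) * E (ρ ⊗ₖ gibbs HA β)))
    :
    ∀ (x : Fin N) (ρ : Matrix (Fin ns) (Fin ns) ℂ) (t : ℝ),
      Inst x (timeEv HS t * ρ * timeEvInv HS t) =
        timeEv HS t * Inst x ρ * timeEvInv HS t :=
  thermal_instrument_covariant_general HS hHS HA hHA β E Ed hdCP hdTP hdU hDual hfix Z hYanase Inst
    hInst
end
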